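/- arXiv:math/0108224 — 2 statements merged into one kernel-verified Lean document; each statement's English description precedes it below -/
import Mathlib

section
/- Let k₁ > 0, C ≥ 0, T > 0, let Υ : [0,T] → [0,∞) be C¹ and nonincreasing, and let W : (0,T] → ℝ be C¹ with W'(t) ≤ −k₁ W(t)² − C Υ'(t) W(t) for all t, and W(t) ≥ 0. Suppose y(t) := e^{−C Υ(t)} / (∫₀ᵗ k₁ e^{−C Υ(s)} ds) satisfies lim_{t→0+} y(t) = +∞ in the sense that for every M there is t₀ with y(t) ≥ M on (0,t₀). Then W(t) ≤ y(t) for all t ∈ (0,T]. In particular W(t) ≤ e^{C Υ(0)}/(k₁ t). -/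
open intervalIntegral Set

theorem stmt_9 (k₁ C T : ℝ) (hk : 0 < k₁) (hC : 0 ≤ C) (hT : 0 < T)
    (Υ : ℝ → ℝ) (hsm : ContDiff ℝ 1 Υ)
    (hnonneg : ∀ t ∈ Icc 0 T, 0 ≤ Υ t)
    (hanti : AntitoneOn Υ (Icc 0 T))
    (W W' : ℝ → ℝ)
    (hW : ∀ t ∈ Ioc 0 T, HasDerivAt W (W' t) t)
    (hWineq : ∀ t ∈ Ioc 0 T, W' t ≤ -k₁ * (W t) ^ 2 - C * deriv Υ t * W t)
    (hWpos : ∀ t ∈ Ioc 0 T, 0 ≤ W t)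
    (y : ℝ → ℝ)
    (hy : ∀ t ∈ Ioc 0 T,
      y t = Real.exp (-C * Υ t) / ∫ s in (0 : ℝ)..t, k₁ * Real.exp (-C * Υ s))
    (hblow : ∀ M : ℝ, ∃ t₀ > (0 : ℝ), ∀ t ∈ Ioo 0 t₀, M ≤ y t) :
    ∀ t ∈ Ioc 0 T, W t ≤ y t ∧ W t ≤ Real.exp (C * Υ 0) / (k₁ * t) := by
  intro t ht
  obtain ⟨ht0, htT⟩ := ht
  set f : ℝ → ℝ := fun s => k₁ * Real.exp (-C * Υ s) with hfdef
  have hfc : Continuous f :=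
    continuous_const.mul (Real.continuous_exp.comp (continuous_const.mul hsm.continuous))
  have hfpos : ∀ s, 0 < f s := fun s => mul_pos hk (Real.exp_pos _)
  set F : ℝ → ℝ := fun u => ∫ s in (0 : ℝ)..u, f s with hFdef
  have hFd : ∀ u : ℝ, HasDerivAt F (f u) u := fun u =>
    intervalIntegral.integral_hasDerivAt_right (hfc.intervalIntegrable 0 u)
      hfc.stronglyMeasurable.stronglyMeasurableAtFilter hfc.continuousAt
  have hFpos : 0 < F t :=
    intervalIntegral.intervalIntegral_pos_of_pos (hfc.intervalIntegrable 0 t)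
      (fun s => hfpos s) ht0
  -- bound on y
  have hFlow : k₁ * Real.exp (-C * Υ 0) * t ≤ F t := by
    have : ∫ s in (0 : ℝ)..t, k₁ * Real.exp (-C * Υ 0) ≤ F t := by
      apply intervalIntegral.integral_mono_on ht0.le
        (intervalIntegrable_const) (hfc.intervalIntegrable 0 t)
      intro x hx
      have hxT : x ∈ Icc (0 : ℝ) T := ⟨hx.1, hx.2.trans htT⟩
      have hΥ : Υ x ≤ Υ 0 := hanti (left_mem_Icc.2 hT.le) hxT hx.1
      have : -C * Υ 0 ≤ -C * Υ x := by nlinarith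
      exact mul_le_mul_of_nonneg_left (Real.exp_le_exp.2 this) hk.le
    have hc : (∫ s in (0:ℝ)..t, k₁ * Real.exp (-C * Υ 0))
        = k₁ * Real.exp (-C * Υ 0) * t := by
      rw [intervalIntegral.integral_const, smul_eq_mul]; ring
    linarith [this]
  have hyb : y t ≤ Real.exp (C * Υ 0) / (k₁ * t) := by
    rw [hy t ⟨ht0, htT⟩]
    have h1 : Real.exp (-C * Υ t) / F t ≤ 1 / (k₁ * Real.exp (-C * Υ 0) * t) := by
      apply div_le_div₀ zero_le_one _ (by positivity) hFlow
      rw [Real.exp_le_one_iff]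
      have := hnonneg t ⟨ht0.le, htT⟩
      nlinarith
    refine h1.trans (le_of_eq ?_)
    rw [neg_mul, Real.exp_neg]
    field_simp
  -- main comparison
  have key : W t ≤ y t := by
    rcases eq_or_lt_of_le (hWpos t ⟨ht0, htT⟩) with h0 | hWt
    · rw [← h0, hy t ⟨ht0, htT⟩]
      positivity
    · set z : ℝ → ℝ := fun u => Real.exp (C * Υ u) * W u with hzdef
      have hΥd : ∀ u : ℝ, HasDerivAt Υ (deriv Υ u) u := fun u =>
        ((hsm.differentiable one_ne_zero) u).hasDerivAt
      have hzd : ∀ u ∈ Ioc (0 : ℝ) T,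
          HasDerivAt z (Real.exp (C * Υ u) * (C * deriv Υ u) * W u
            + Real.exp (C * Υ u) * W' u) u := by
        intro u hu
        exact (((hΥd u).const_mul C).exp).mul (hW u hu)
      have hzd_le : ∀ u ∈ Ioc (0 : ℝ) T,
          Real.exp (C * Υ u) * (C * deriv Υ u) * W u + Real.exp (C * Υ u) * W' u
            ≤ -k₁ * Real.exp (C * Υ u) * (W u) ^ 2 := by
        intro u hu
        have h1 := hWineq u hu
        have h2 : Real.exp (C * Υ u) * W' u
            ≤ Real.exp (C * Υ u) * (-k₁ * (W u) ^ 2 - C * deriv Υ u * W u) :=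
          mul_le_mul_of_nonneg_left h1 (Real.exp_pos _).le
        nlinarith [Real.exp_pos (C * Υ u)]
      have hzcont : ContinuousOn z (Ioc 0 T) := fun u hu =>
        ((hzd u hu).continuousAt).continuousWithinAt
      have hzanti : AntitoneOn z (Ioc 0 T) := by
        apply antitoneOn_of_deriv_nonpos (convex_Ioc 0 T) hzcont
        · intro x hx
          rw [interior_Ioc] at hx
          exact ((hzd x (Ioo_subset_Ioc_self hx)).differentiableAt).differentiableWithinAt
        · intro x hx
          rw [interior_Ioc] at hx
          have hx' : x ∈ Ioc (0 : ℝ) T := Ioo_subset_Ioc_self hx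
          rw [(hzd x hx').deriv]
          have h1 := hzd_le x hx'
          have h2 : 0 ≤ k₁ * Real.exp (C * Υ x) * (W x) ^ 2 := by positivity
          linarith
      have hzt : 0 < z t := mul_pos (Real.exp_pos _) hWt
      have hzpos : ∀ u ∈ Ioc (0 : ℝ) t, 0 < z u := by
        intro u hu
        exact lt_of_lt_of_le hzt (hzanti ⟨hu.1, hu.2.trans htT⟩ ⟨ht0, htT⟩ hu.2)
      -- φ := 1/z - F is monotone on [s,t]
      have hmain : ∀ s ∈ Ioc (0 : ℝ) t, F t ≤ (z t)⁻¹ + F s := by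
        intro s hs
        have hsub : Icc s t ⊆ Ioc 0 t := fun x hx => ⟨lt_of_lt_of_le hs.1 hx.1, hx.2⟩
        have hsubT : Icc s t ⊆ Ioc 0 T := fun x hx =>
          ⟨lt_of_lt_of_le hs.1 hx.1, hx.2.trans htT⟩
        set φ : ℝ → ℝ := fun u => (z u)⁻¹ - F u with hφdef
        have hφd : ∀ x ∈ Ioc (0 : ℝ) t,
            HasDerivAt φ (-(Real.exp (C * Υ x) * (C * deriv Υ x) * W x
              + Real.exp (C * Υ x) * W' x) / (z x) ^ 2 - f x) x := by
          intro x hx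
          have hxT : x ∈ Ioc (0 : ℝ) T := ⟨hx.1, hx.2.trans htT⟩
          exact ((hzd x hxT).inv (ne_of_gt (hzpos x hx))).sub (hFd x)
        have hmono : MonotoneOn φ (Icc s t) := by
          apply monotoneOn_of_deriv_nonneg (convex_Icc s t)
          · intro x hx
            exact (hφd x (hsub hx)).continuousAt.continuousWithinAt
          · intro x hx
            rw [interior_Icc] at hx
            exact ((hφd x (hsub (Ioo_subset_Icc_self hx))).differentiableAt).differentiableWithinAt
          · intro x hx
            rw [interior_Icc] at hx
            have hx' : x ∈ Ioc (0 : ℝ) t := hsub (Ioo_subset_Icc_self hx)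
            have hxT : x ∈ Ioc (0 : ℝ) T := ⟨hx'.1, hx'.2.trans htT⟩
            rw [(hφd x hx').deriv]
            have h1 := hzd_le x hxT
            have hz2 : 0 < (z x) ^ 2 := pow_pos (hzpos x hx') 2
            have hfx : f x * (z x) ^ 2 = k₁ * Real.exp (C * Υ x) * (W x) ^ 2 := by
              simp only [hfdef, hzdef]
              rw [neg_mul, Real.exp_neg]
              field_simp
            rw [sub_nonneg, le_div_iff₀ hz2]
            nlinarith
        have := hmono ⟨le_refl s, hs.2⟩ ⟨hs.2, le_refl t⟩ hs.2
        simp only [hφdef] at this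
        have hzs : 0 < (z s)⁻¹ := inv_pos.2 (hzpos s hs)
        linarith
      have hkey : F t ≤ (z t)⁻¹ := by
        apply le_of_forall_pos_le_add
        intro ε hε
        have hFc : ContinuousAt F 0 := (hFd 0).continuousAt
        rw [Metric.continuousAt_iff] at hFc
        obtain ⟨δ, hδ, hδ'⟩ := hFc ε hε
        set s := min (δ / 2) t with hsdef
        have hs0 : 0 < s := lt_min (by linarith) ht0
        have hst : s ≤ t := min_le_right _ _
        have hFs : |F s| < ε := by
          have : dist s 0 < δ := by
            rw [Real.dist_eq, sub_zero, abs_of_pos hs0]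
            calc s ≤ δ / 2 := min_le_left _ _
              _ < δ := by linarith
          have := hδ' this
          rw [Real.dist_eq] at this
          have hF0 : F 0 = 0 := intervalIntegral.integral_same
          rwa [hF0, sub_zero] at this
        have := hmain s ⟨hs0, hst⟩
        have := abs_lt.1 hFs
        linarith
      -- conclude
      have hWy : W t ≤ Real.exp (-C * Υ t) / F t := by
        have hzt' : z t ≤ (F t)⁻¹ := by
          have h1 : F t * z t ≤ (z t)⁻¹ * z t := mul_le_mul_of_nonneg_right hkey hzt.le
          rw [inv_mul_cancel₀ (ne_of_gt hzt)] at h1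
          rw [← one_div, le_div_iff₀ hFpos]
          linarith [mul_comm (F t) (z t)]
        have : Real.exp (-C * Υ t) * z t ≤ Real.exp (-C * Υ t) * (F t)⁻¹ :=
          mul_le_mul_of_nonneg_left hzt' (Real.exp_pos _).le
        have hWz : Real.exp (-C * Υ t) * z t = W t := by
          simp only [hzdef]
          rw [neg_mul, Real.exp_neg]
          field_simp
        rw [hWz] at this
        rwa [div_eq_mul_inv]
      rw [hy t ⟨ht0, htT⟩]
      exact hWy
  exact ⟨key, key.trans hyb⟩
end

section
/- Let f : ℝ² → ℝ² be smooth, and let R : (−δ,δ) → ℝ² be a smooth curve with R(0) = u₀, R'(0) = r₁, where Df(u₀) has distinct real eigenvalues λ₁ ≠ λ₂ with eigenvectors r₁, r₂ spanning ℝ², and Df(R(σ))R'(σ) = λ₁(R(σ)) R'(σ) along the curve. Define χ(σ, c) := (f(R(σ) + c·(σ³/6)·r₂) − f(u₀)) ∧ (R(σ) + c·(σ³/6)·r₂ − u₀), where ∧ denotes the scalar cross product in ℝ². Then ∂⁴χ/∂σ⁴ at σ = 0, evaluated with c constant, equals 4(λ₂ − λ₁) c (r₂ ∧ r₁) + 2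 (R'''(0) ∧ r₁) up to the identification R'''(0) handled via Dr₁·r₁, and the equation ∂⁴χ/∂σ⁴(0) = 0 is solved by c = ((Dr₁·r₁) ∧ r₁) / (2(λ₂ − λ₁)(r₁ ∧ r₂)). -/
open scoped ContDiff

/-- Scalar cross product in ℝ²: v ∧ w = v₁w₂ − v₂w₁. -/
def wedge (v w : ℝ × ℝ) : ℝ := v.1 * w.2 - v.2 * w.1

private lemma wedge_hasDerivAt {F G : ℝ → ℝ × ℝ} {F' G' : ℝ × ℝ} {x : ℝ}
    (hF : HasDerivAt F F' x) (hG : HasDerivAt G G' x) :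
    HasDerivAt (fun σ => wedge (F σ) (G σ))
      (wedge F' (G x) + wedge (F x) G') x := by
  have h1 : HasDerivAt (fun σ => (F σ).1) F'.1 x :=
    (ContinuousLinearMap.fst ℝ ℝ ℝ).hasFDerivAt.comp_hasDerivAt x hF
  have h2 : HasDerivAt (fun σ => (F σ).2) F'.2 x :=
    (ContinuousLinearMap.snd ℝ ℝ ℝ).hasFDerivAt.comp_hasDerivAt x hF
  have h3 : HasDerivAt (fun σ => (G σ).1) G'.1 x :=
    (ContinuousLinearMap.fst ℝ ℝ ℝ).hasFDerivAt.comp_hasDerivAt x hG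
  have h4 : HasDerivAt (fun σ => (G σ).2) G'.2 x :=
    (ContinuousLinearMap.snd ℝ ℝ ℝ).hasFDerivAt.comp_hasDerivAt x hG
  have := (h1.mul h4).sub (h2.mul h3)
  simp only [wedge]
  exact this.congr_deriv (by ring)

private lemma key_clm {M : Type*} [NormedAddCommGroup M] [NormedSpace ℝ M]
    {A : ℝ × ℝ → (ℝ × ℝ) →L[ℝ] M} {g u : ℝ → ℝ × ℝ} {g' u' : ℝ × ℝ} {x : ℝ}
    (hA : DifferentiableAt ℝ A (g x)) (hg : HasDerivAt g g' x)
    (hu : HasDerivAt u u' x) :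
    HasDerivAt (fun σ => A (g σ) (u σ))
      (fderiv ℝ A (g x) g' (u x) + A (g x) u') x :=
  (hA.hasFDerivAt.comp_hasDerivAt x hg).clm_apply hu

private noncomputable instance instNACG3 :
    NormedAddCommGroup ((ℝ × ℝ) →L[ℝ] ((ℝ × ℝ) →L[ℝ] ((ℝ × ℝ) →L[ℝ] (ℝ × ℝ)))) :=
  @ContinuousLinearMap.toNormedAddCommGroup ℝ ℝ (ℝ × ℝ) ((ℝ × ℝ) →L[ℝ] ((ℝ × ℝ) →L[ℝ] (ℝ × ℝ)))
    _ _ _ _ _ _ (RingHom.id ℝ) _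

private noncomputable instance instNS3 :
    NormedSpace ℝ ((ℝ × ℝ) →L[ℝ] ((ℝ × ℝ) →L[ℝ] ((ℝ × ℝ) →L[ℝ] (ℝ × ℝ)))) :=
  @ContinuousLinearMap.toNormedSpace ℝ ℝ (ℝ × ℝ) ((ℝ × ℝ) →L[ℝ] ((ℝ × ℝ) →L[ℝ] (ℝ × ℝ)))
    _ _ _ _ _ _ (RingHom.id ℝ) _ ℝ _ _ _

private theorem aux_stmt16 (f : ℝ × ℝ → ℝ × ℝ) (hf : ContDiff ℝ (⊤ : ℕ∞) f)
    (δ : ℝ) (hδ : 0 < δ) (R : ℝ → ℝ × ℝ) (hR : ContDiff ℝ (⊤ : ℕ∞) R)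
    (u₀ r₁ r₂ : ℝ × ℝ) (lam₁ lam₂ : ℝ)
    (hR0 : R 0 = u₀) (hR'0 : deriv R 0 = r₁)
    (heig1 : fderiv ℝ f u₀ r₁ = lam₁ • r₁)
    (heig2 : fderiv ℝ f u₀ r₂ = lam₂ • r₂)
    (heigR : ∀ σ ∈ Set.Ioo (-δ) δ,
      fderiv ℝ f (R σ) (deriv R σ) = (lam₁ + σ) • deriv R σ)
    (c : ℝ) :
    iteratedDeriv 4 (fun σ => wedge (f (R σ + (c * σ ^ 3 / 6) • r₂) - f u₀)
        (R σ + (c * σ ^ 3 / 6) • r₂ - u₀)) 0 =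
      4 * (lam₂ - lam₁) * c * wedge r₂ r₁ + 2 * wedge (deriv (deriv R) 0) r₁ := by
  have one_le : (1 : WithTop ℕ∞) ≤ ∞ := by norm_num
  have hfd : Differentiable ℝ f := hf.differentiable (by simp)
  set Df := fderiv ℝ f with hDf_def
  set D2f := fderiv ℝ Df with hD2f_def
  set D3f := fderiv ℝ D2f with hD3f_def
  have hDfc : ContDiff ℝ (⊤ : ℕ∞) Df := hf.fderiv_right (by simp)
  have hD2fc : ContDiff ℝ (⊤ : ℕ∞) D2f := hDfc.fderiv_right (by simp)
  have hD3fc : ContDiff ℝ (⊤ : ℕ∞) D3f := hD2fc.fderiv_right (by simp)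
  set R1 := deriv R with hR1_def
  set R2 := deriv R1 with hR2_def
  set R3 := deriv R2 with hR3_def
  have hR1c : ContDiff ℝ ∞ R1 := (contDiff_infty_iff_deriv.mp (hR.of_le (by simp))).2
  have hR2c : ContDiff ℝ ∞ R2 := (contDiff_infty_iff_deriv.mp hR1c).2
  have hR3c : ContDiff ℝ ∞ R3 := (contDiff_infty_iff_deriv.mp hR2c).2
  have hRd : ∀ x, HasDerivAt R (R1 x) x := fun x => ((hR.differentiable (by simp)) x).hasDerivAt
  have hR1d : ∀ x, HasDerivAt R1 (R2 x) x := fun x => ((hR1c.differentiable (by simp)) x).hasDerivAt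
  have hR2d : ∀ x, HasDerivAt R2 (R3 x) x := fun x => ((hR2c.differentiable (by simp)) x).hasDerivAt
  -- the perturbed curve and its derivatives
  set g : ℝ → ℝ × ℝ := fun σ => R σ + (c * σ ^ 3 / 6) • r₂ with hg_def
  set g1 : ℝ → ℝ × ℝ := fun σ => R1 σ + (c * σ ^ 2 / 2) • r₂ with hg1_def
  set g2 : ℝ → ℝ × ℝ := fun σ => R2 σ + (c * σ) • r₂ with hg2_def
  set g3 : ℝ → ℝ × ℝ := fun σ => R3 σ + c • r₂ with hg3_def
  have hgd : ∀ x, HasDerivAt g (g1 x) x := by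
    intro x
    have hq : HasDerivAt (fun σ : ℝ => c * σ ^ 3 / 6) (c * x ^ 2 / 2) x := by
      have := ((hasDerivAt_pow 3 x).const_mul c).div_const 6
      exact this.congr_deriv (by push_cast; ring)
    exact (hRd x).add (hq.smul_const r₂)
  have hg1d : ∀ x, HasDerivAt g1 (g2 x) x := by
    intro x
    have hq : HasDerivAt (fun σ : ℝ => c * σ ^ 2 / 2) (c * x) x := by
      have := ((hasDerivAt_pow 2 x).const_mul c).div_const 2
      exact this.congr_deriv (by push_cast; ring)
    exact (hR1d x).add (hq.smul_const r₂)
  have hg2d : ∀ x, HasDerivAt g2 (g3 x) x := by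
    intro x
    have hq : HasDerivAt (fun σ : ℝ => c * σ) c x := by
      simpa using (hasDerivAt_id x).const_mul c
    exact (hR2d x).add (hq.smul_const r₂)
  have hg3d : HasDerivAt g3 (deriv R3 0) 0 :=
    ((hR3c.differentiable (by simp) 0).hasDerivAt).add_const (c • r₂)
  -- the two factors of χ and their derivatives
  set F : ℝ → ℝ × ℝ := fun σ => f (g σ) - f u₀ with hF_def
  set G : ℝ → ℝ × ℝ := fun σ => g σ - u₀ with hG_def
  set F1 : ℝ → ℝ × ℝ := fun σ => Df (g σ) (g1 σ) with hF1_def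
  set F2 : ℝ → ℝ × ℝ := fun σ => D2f (g σ) (g1 σ) (g1 σ) + Df (g σ) (g2 σ) with hF2_def
  set F3 : ℝ → ℝ × ℝ := fun σ =>
    ((D3f (g σ) (g1 σ) (g1 σ) + D2f (g σ) (g2 σ)) (g1 σ) + D2f (g σ) (g1 σ) (g2 σ)) +
      (D2f (g σ) (g1 σ) (g2 σ) + Df (g σ) (g3 σ)) with hF3_def
  have hFd : ∀ x, HasDerivAt F (F1 x) x := fun x =>
    ((hfd (g x)).hasFDerivAt.comp_hasDerivAt x (hgd x)).sub_const (f u₀)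
  have hGd : ∀ x, HasDerivAt G (g1 x) x := fun x => (hgd x).sub_const u₀
  have hF1d : ∀ x, HasDerivAt F1 (F2 x) x := fun x =>
    key_clm (hDfc.differentiable (by simp) (g x)) (hgd x) (hg1d x)
  have hF2d : ∀ x, HasDerivAt F2 (F3 x) x := fun x =>
    ((key_clm (hD2fc.differentiable (by simp) (g x)) (hgd x) (hg1d x)).clm_apply (hg1d x)).add
      (key_clm (hDfc.differentiable (by simp) (g x)) (hgd x) (hg2d x))
  have hF3diff : DifferentiableAt ℝ F3 0 := by
    have dg : DifferentiableAt ℝ g 0 := (hgd 0).differentiableAt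
    have dg1 : DifferentiableAt ℝ g1 0 := (hg1d 0).differentiableAt
    have dg2 : DifferentiableAt ℝ g2 0 := (hg2d 0).differentiableAt
    have dg3 : DifferentiableAt ℝ g3 0 := hg3d.differentiableAt
    have dD3 : DifferentiableAt ℝ (fun σ => D3f (g σ)) 0 :=
      ((hD3fc.differentiable (by simp)) (g 0)).comp 0 dg
    have dD2 : DifferentiableAt ℝ (fun σ => D2f (g σ)) 0 :=
      ((hD2fc.differentiable (by simp)) (g 0)).comp 0 dg
    have dD1 : DifferentiableAt ℝ (fun σ => Df (g σ)) 0 :=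
      ((hDfc.differentiable (by simp)) (g 0)).comp 0 dg
    exact (((((dD3.clm_apply dg1).clm_apply dg1).add (dD2.clm_apply dg2)).clm_apply dg1).add
        ((dD2.clm_apply dg1).clm_apply dg2)).add
      (((dD2.clm_apply dg1).clm_apply dg2).add (dD1.clm_apply dg3))
  -- χ (for this fixed c) and its first three derivatives as functions
  set X : ℝ → ℝ := fun σ => wedge (F σ) (G σ) with hX_def
  set X1 : ℝ → ℝ := fun σ => wedge (F1 σ) (G σ) + wedge (F σ) (g1 σ) with hX1_def
  set X2 : ℝ → ℝ := fun σ => (wedge (F2 σ) (G σ) + wedge (F1 σ) (g1 σ)) +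
      (wedge (F1 σ) (g1 σ) + wedge (F σ) (g2 σ)) with hX2_def
  set X3 : ℝ → ℝ := fun σ =>
      ((wedge (F3 σ) (G σ) + wedge (F2 σ) (g1 σ)) +
        (wedge (F2 σ) (g1 σ) + wedge (F1 σ) (g2 σ))) +
      ((wedge (F2 σ) (g1 σ) + wedge (F1 σ) (g2 σ)) +
        (wedge (F1 σ) (g2 σ) + wedge (F σ) (g3 σ))) with hX3_def
  have hXd : ∀ x, HasDerivAt X (X1 x) x := fun x => wedge_hasDerivAt (hFd x) (hGd x)
  have hX1d : ∀ x, HasDerivAt X1 (X2 x) x := fun x =>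
    (wedge_hasDerivAt (hF1d x) (hGd x)).add (wedge_hasDerivAt (hFd x) (hg1d x))
  have hX2d : ∀ x, HasDerivAt X2 (X3 x) x := fun x =>
    ((wedge_hasDerivAt (hF2d x) (hGd x)).add (wedge_hasDerivAt (hF1d x) (hg1d x))).add
      ((wedge_hasDerivAt (hF1d x) (hg1d x)).add (wedge_hasDerivAt (hFd x) (hg2d x)))
  have hX3d : HasDerivAt X3
      (((wedge (deriv F3 0) (G 0) + wedge (F3 0) (g1 0) +
          (wedge (F3 0) (g1 0) + wedge (F2 0) (g2 0))) +
        (wedge (F3 0) (g1 0) + wedge (F2 0) (g2 0) +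
          (wedge (F2 0) (g2 0) + wedge (F1 0) (g3 0)))) +
       ((wedge (F3 0) (g1 0) + wedge (F2 0) (g2 0) +
          (wedge (F2 0) (g2 0) + wedge (F1 0) (g3 0))) +
        (wedge (F2 0) (g2 0) + wedge (F1 0) (g3 0) +
          (wedge (F1 0) (g3 0) + wedge (F 0) (deriv R3 0))))) 0 :=
    (((wedge_hasDerivAt hF3diff.hasDerivAt (hGd 0)).add
        (wedge_hasDerivAt (hF2d 0) (hg1d 0))).add
      ((wedge_hasDerivAt (hF2d 0) (hg1d 0)).add (wedge_hasDerivAt (hF1d 0) (hg2d 0)))).add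
      (((wedge_hasDerivAt (hF2d 0) (hg1d 0)).add (wedge_hasDerivAt (hF1d 0) (hg2d 0))).add
        ((wedge_hasDerivAt (hF1d 0) (hg2d 0)).add (wedge_hasDerivAt (hFd 0) hg3d)))
  -- the eigenvalue identity along R and its first two derivatives at 0
  set E : ℝ → ℝ × ℝ := fun σ => Df (R σ) (R1 σ) - (lam₁ + σ) • R1 σ with hE_def
  set E1 : ℝ → ℝ × ℝ := fun σ =>
    (D2f (R σ) (R1 σ) (R1 σ) + Df (R σ) (R2 σ)) -
      ((lam₁ + σ) • R2 σ + (1:ℝ) • R1 σ) with hE1_def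
  have hEd : ∀ x, HasDerivAt E (E1 x) x := fun x =>
    (key_clm (hDfc.differentiable (by simp) (R x)) (hRd x) (hR1d x)).sub
      (((hasDerivAt_id x).const_add lam₁).smul (hR1d x))
  have hE1d : HasDerivAt E1
      ((((D3f (R 0) (R1 0) (R1 0) + D2f (R 0) (R2 0)) (R1 0) + D2f (R 0) (R1 0) (R2 0)) +
          (D2f (R 0) (R1 0) (R2 0) + Df (R 0) (R3 0))) -
        (((lam₁ + 0) • R3 0 + (1:ℝ) • R2 0) + (1:ℝ) • R2 0)) 0 :=
    (((key_clm (hD2fc.differentiable (by simp) (R 0)) (hRd 0) (hR1d 0)).clm_apply (hR1d 0)).add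
        (key_clm (hDfc.differentiable (by simp) (R 0)) (hRd 0) (hR2d 0))).sub
      ((((hasDerivAt_id 0).const_add lam₁).smul (hR2d 0)).add
        ((hR1d 0).const_smul (1:ℝ)))
  have h0mem : (0:ℝ) ∈ Set.Ioo (-δ) δ := ⟨neg_lt_zero.mpr hδ, hδ⟩
  have hE0 : ∀ x ∈ Set.Ioo (-δ) δ, E x = 0 := by
    intro x hx
    simp only [hE_def]
    rw [heigR x hx]
    exact sub_self _
  have hE1_0 : ∀ x ∈ Set.Ioo (-δ) δ, E1 x = 0 := by
    intro x hx
    have hev : E =ᶠ[nhds x] (fun _ => (0:ℝ×ℝ)) :=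
      Filter.eventuallyEq_of_mem (isOpen_Ioo.mem_nhds hx) hE0
    have h := hev.deriv_eq
    rw [(hEd x).deriv] at h
    simpa using h
  have hE2_0 : (((D3f (R 0) (R1 0) (R1 0) + D2f (R 0) (R2 0)) (R1 0) +
        D2f (R 0) (R1 0) (R2 0)) +
        (D2f (R 0) (R1 0) (R2 0) + Df (R 0) (R3 0))) -
      (((lam₁ + 0) • R3 0 + (1:ℝ) • R2 0) + (1:ℝ) • R2 0) = 0 := by
    have hev : E1 =ᶠ[nhds 0] (fun _ => (0:ℝ×ℝ)) :=
      Filter.eventuallyEq_of_mem (isOpen_Ioo.mem_nhds h0mem) hE1_0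
    have h := hev.deriv_eq
    rw [hE1d.deriv] at h
    simpa using h
  -- values at 0
  have hg0 : g 0 = u₀ := by
    simp only [hg_def]
    norm_num [hR0]
  have hg10 : g1 0 = r₁ := by
    simp only [hg1_def]
    norm_num [hR'0]
  have hg20 : g2 0 = R2 0 := by
    simp only [hg2_def]
    norm_num
  have hg30 : g3 0 = R3 0 + c • r₂ := rfl
  have hF0 : F 0 = 0 := by
    simp only [hF_def, hg0, sub_self]
  have hG0 : G 0 = 0 := by
    simp only [hG_def, hg0, sub_self]
  have hF10 : F1 0 = lam₁ • r₁ := by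
    simp only [hF1_def, hg0, hg10]
    exact heig1
  have hF20 : F2 0 = D2f u₀ r₁ r₁ + Df u₀ (R2 0) := by
    simp only [hF2_def, hg0, hg10, hg20]
  have hF30 : F3 0 = ((D3f u₀ r₁ r₁ + D2f u₀ (R2 0)) r₁ + D2f u₀ r₁ (R2 0)) +
      (D2f u₀ r₁ (R2 0) + (Df u₀ (R3 0) + c • (lam₂ • r₂))) := by
    simp only [hF3_def, hg0, hg10, hg20, hg30, map_add, map_smul, heig2]
  -- component forms of the two eigenvalue-identity relations
  have hA : D2f u₀ r₁ r₁ + Df u₀ (R2 0) = (lam₁ + 0) • R2 0 + (1:ℝ) • r₁ := by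
    have := hE1_0 0 h0mem
    simp only [hE1_def, hR0, hR'0] at this
    exact sub_eq_zero.mp this
  have hB : ((D3f u₀ r₁ r₁ + D2f u₀ (R2 0)) r₁ + D2f u₀ r₁ (R2 0)) +
      (D2f u₀ r₁ (R2 0) + Df u₀ (R3 0)) =
      ((lam₁ + 0) • R3 0 + (1:ℝ) • R2 0) + (1:ℝ) • R2 0 := by
    have := hE2_0
    rw [hR0, hR'0] at this
    exact sub_eq_zero.mp this
  -- compute the fourth derivative
  have e1 : deriv X = X1 := funext fun x => (hXd x).deriv
  have e2 : deriv X1 = X2 := funext fun x => (hX1d x).deriv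
  have e3 : deriv X2 = X3 := funext fun x => (hX2d x).deriv
  have e4 : iteratedDeriv 4 X 0 = deriv (deriv (deriv (deriv X))) 0 := by
    rw [iteratedDeriv_eq_iterate]
    rfl
  rw [e4, e1, e2, e3, hX3d.deriv]
  rw [hG0, hF0, hg10, hg20, hg30, hF10, hF20, hF30]
  -- reduce to a scalar identity in the components
  rw [Prod.ext_iff] at hA hB
  obtain ⟨hA1, hA2⟩ := hA
  obtain ⟨hB1, hB2⟩ := hB
  simp only [wedge, ContinuousLinearMap.add_apply, Prod.fst_add, Prod.snd_add,
    Prod.smul_fst, Prod.smul_snd, smul_eq_mul, Prod.fst_zero, Prod.snd_zero] at hA1 hA2 hB1 hB2 ⊢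
  linear_combination (4 * r₁.2) * hB1 - (4 * r₁.1) * hB2 +
    (6 * (R2 0).2) * hA1 - (6 * (R2 0).1) * hA2

theorem stmt_16 (f : ℝ × ℝ → ℝ × ℝ) (hf : ContDiff ℝ (⊤ : ℕ∞) f)
    (δ : ℝ) (hδ : 0 < δ) (R : ℝ → ℝ × ℝ) (hR : ContDiff ℝ (⊤ : ℕ∞) R)
    (u₀ r₁ r₂ : ℝ × ℝ) (lam₁ lam₂ : ℝ) (hlam : lam₁ ≠ lam₂)
    (hR0 : R 0 = u₀) (hR'0 : deriv R 0 = r₁)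
    (heig1 : fderiv ℝ f u₀ r₁ = lam₁ • r₁)
    (heig2 : fderiv ℝ f u₀ r₂ = lam₂ • r₂)
    (hspan : wedge r₁ r₂ ≠ 0)
    -- R is the 1-rarefaction curve: R' is an eigenvector of Df along the curve,
    -- parametrized so that the eigenvalue is lam₁ + σ
    (heigR : ∀ σ ∈ Set.Ioo (-δ) δ,
      fderiv ℝ f (R σ) (deriv R σ) = (lam₁ + σ) • deriv R σ)
    (χ : ℝ → ℝ → ℝ)
    (hχ : ∀ σ c, χ σ c =
      wedge (f (R σ + (c * σ ^ 3 / 6) • r₂) - f u₀)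
            (R σ + (c * σ ^ 3 / 6) • r₂ - u₀)) :
    (∀ c : ℝ, iteratedDeriv 4 (fun σ => χ σ c) 0 =
        4 * (lam₂ - lam₁) * c * wedge r₂ r₁ + 2 * wedge (iteratedDeriv 2 R 0) r₁) ∧
    iteratedDeriv 4
        (fun σ => χ σ (wedge (iteratedDeriv 2 R 0) r₁ / (2 * (lam₂ - lam₁) * wedge r₁ r₂)))
        0 = 0 := by
  have hiter2 : iteratedDeriv 2 R 0 = deriv (deriv R) 0 := by
    rw [iteratedDeriv_eq_iterate]
    rfl
  have main : ∀ c : ℝ, iteratedDeriv 4 (fun σ => χ σ c) 0 =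
      4 * (lam₂ - lam₁) * c * wedge r₂ r₁ + 2 * wedge (iteratedDeriv 2 R 0) r₁ := by
    intro c
    have hfun : (fun σ => χ σ c) = fun σ =>
        wedge (f (R σ + (c * σ ^ 3 / 6) • r₂) - f u₀)
          (R σ + (c * σ ^ 3 / 6) • r₂ - u₀) := funext fun σ => hχ σ c
    rw [hfun, hiter2]
    exact aux_stmt16 f hf δ hδ R hR u₀ r₁ r₂ lam₁ lam₂ hR0 hR'0 heig1 heig2 heigR c
  refine ⟨main, ?_⟩
  rw [main _]
  have h1 : lam₂ - lam₁ ≠ 0 := sub_ne_zero.mpr (Ne.symm hlam)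
  have h2 : wedge r₂ r₁ = - wedge r₁ r₂ := by
    simp only [wedge]; ring
  rw [h2]
  field_simp
  ring
end
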